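/- (Theorem 1) Let H₀ = Σ E_n e_{nn} with real E_n and μ_n = E_{n+1} - E_n, and H₁ = Σ_{n=1}^{N-1} d_n(e_{n,n+1}+e_{n+1,n}) with all d_n ≠ 0. If μ_1 ≠ 0 and μ_n² ≠ μ_1² for all 2 ≤ n ≤ N-1, then the real Lie algebra generated by iH₀ and iH₁ contains su(N). -/

import Mathlib

open Matrix Complex Finset

open Matrix Complex Finset

attribute [local instance] LieRing.ofAssociativeRing

noncomputable def e (N m n : ℕ) : Matrix (Fin N) (Fin N) ℂ :=
  Matrix.of fun k l => if (k : ℕ) + 1 = m ∧ (l : ℕ) + 1 = n then 1 else 0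

lemma e_mul (N m n k l : ℕ) :
    e N m n * e N k l = if n = k ∧ 1 ≤ n ∧ n ≤ N then e N m l else 0 := by
  ext a b
  simp only [Matrix.mul_apply, e, Matrix.of_apply]
  by_cases h : n = k ∧ 1 ≤ n ∧ n ≤ N
  · obtain ⟨rfl, h1, h2⟩ := h
    rw [Finset.sum_eq_single (⟨n - 1, by omega⟩ : Fin N)]
    · have h3 : (n:ℕ) - 1 + 1 = n := by omega
      simp only [Fin.val_mk, h3, if_pos (⟨rfl, h1, h2⟩ : n = n ∧ 1 ≤ n ∧ n ≤ N),
        Matrix.of_apply]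
      by_cases ha : (a:ℕ)+1 = m <;> by_cases hb : (b:ℕ)+1 = l <;> simp [ha, hb, h1, h2]
    · intro c _ hc'
      have : (c : ℕ) + 1 ≠ n := by
        intro hh
        exact hc' (Fin.ext (by simp only [Fin.val_mk]; omega))
      simp [this]
    · simp
  · have hz : ∀ c : Fin N, (if (a:ℕ)+1 = m ∧ (c:ℕ)+1 = n then (1:ℂ) else 0) * (if (c:ℕ)+1 = k ∧ (b:ℕ)+1 = l then 1 else 0) = 0 := by
      intro c
      by_cases h1 : (c:ℕ)+1 = n
      · have : (c:ℕ)+1 ≠ k := fun hk => h ⟨by omega, by omega, by omega⟩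
        simp [this]
      · simp [h1]
    simp [hz, if_neg h]

noncomputable def Xg (N m n : ℕ) : Matrix (Fin N) (Fin N) ℂ := e N m n - e N n m
noncomputable def Yg (N m n : ℕ) : Matrix (Fin N) (Fin N) ℂ := Complex.I • (e N m n + e N n m)
noncomputable def Zg (N m n : ℕ) : Matrix (Fin N) (Fin N) ℂ := Complex.I • (e N m m - e N n n)

lemma e_zero_left (N n : ℕ) : e N 0 n = 0 := by ext a b; simp [e]
lemma e_zero_right (N n : ℕ) : e N n 0 = 0 := by ext a b; simp [e]

lemma Xg_zero (N n : ℕ) : Xg N 0 n = 0 := by simp [Xg, e_zero_left, e_zero_right]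

lemma sum_lie' {R ι : Type*} [Ring R] (s : Finset ι) (f : ι → R) (x : R) :
    ⁅∑ i ∈ s, f i, x⁆ = ∑ i ∈ s, ⁅f i, x⁆ := by
  simp [Ring.lie_def, Finset.sum_mul, Finset.mul_sum, Finset.sum_sub_distrib]

lemma lie_sum' {R ι : Type*} [Ring R] (s : Finset ι) (f : ι → R) (x : R) :
    ⁅x, ∑ i ∈ s, f i⁆ = ∑ i ∈ s, ⁅x, f i⁆ := by
  simp [Ring.lie_def, Finset.sum_mul, Finset.mul_sum, Finset.sum_sub_distrib]

lemma rsmul (r : ℝ) (M : Matrix (Fin N) (Fin N) ℂ) : (r : ℂ) • M = r • M := by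
  rw [← Complex.coe_algebraMap, algebraMap_smul]

lemma lie_e_e (N a b c f : ℕ) :
    ⁅e N a b, e N c f⁆ = (if b = c ∧ 1 ≤ b ∧ b ≤ N then e N a f else 0)
      - (if f = a ∧ 1 ≤ f ∧ f ≤ N then e N c b else 0) := by
  rw [Ring.lie_def, e_mul, e_mul]

lemma lie_Xg_Xg (N m k l : ℕ) (hmk : m ≠ k) (hkl : k ≠ l) (hml : m ≠ l)
    (hk : 1 ≤ k ∧ k ≤ N) :
    ⁅Xg N m k, Xg N k l⁆ = Xg N m l := by
  have h1 : k ≠ m := hmk.symm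
  have h2 : l ≠ k := hkl.symm
  have h3 : l ≠ m := hml.symm
  simp only [Xg, Ring.lie_def, mul_add, add_mul, sub_mul, mul_sub, e_mul,
    hmk, hkl, hml, h1, h2, h3, hk, if_true, if_false, and_true, and_false,
    false_and, if_pos, le_refl, true_and]
  module

lemma lie_Xg_Yg (N m k l : ℕ) (hmk : m ≠ k) (hkl : k ≠ l) (hml : m ≠ l)
    (hk : 1 ≤ k ∧ k ≤ N) :
    ⁅Xg N m k, Yg N k l⁆ = Yg N m l := by
  have h1 : k ≠ m := hmk.symm
  have h2 : l ≠ k := hkl.symm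
  have h3 : l ≠ m := hml.symm
  simp only [Xg, Yg, Ring.lie_def, mul_add, add_mul, sub_mul, mul_sub, e_mul,
    smul_mul_assoc, mul_smul_comm,
    hmk, hkl, hml, h1, h2, h3, hk, if_true, if_false, and_true, and_false,
    false_and, if_pos, le_refl, true_and]
  module

lemma lie_Xg_Yg_same (N m n : ℕ) (hmn : m ≠ n) (hm : 1 ≤ m ∧ m ≤ N) (hn : 1 ≤ n ∧ n ≤ N) :
    ⁅Xg N m n, Yg N m n⁆ = (2:ℝ) • Zg N m n := by
  have hnm : n ≠ m := hmn.symm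
  simp only [Xg, Yg, Zg, Ring.lie_def, mul_add, add_mul, sub_mul, mul_sub,
    smul_mul_assoc, mul_smul_comm, e_mul, hmn, hnm, hm, hn, if_true, if_false,
    and_true, and_false, false_and, eq_self_iff_true, true_and, if_pos, le_refl]
  module

lemma lie_Zg_Xg_adj (N n : ℕ) (h1 : 1 ≤ n) (h2 : n + 2 ≤ N) :
    ⁅Zg N n (n+1), Xg N (n+1) (n+2)⁆ = - Yg N (n+1) (n+2) := by
  have c1 : n ≠ n + 1 := by omega
  have c2 : n ≠ n + 2 := by omega
  have c3 : n + 1 ≠ n + 2 := by omega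
  have c4 : n + 1 ≠ n := by omega
  have c5 : n + 2 ≠ n := by omega
  have c6 : n + 2 ≠ n + 1 := by omega
  have hn : 1 ≤ n ∧ n ≤ N := ⟨by omega, by omega⟩
  have hn1 : 1 ≤ n + 1 ∧ n + 1 ≤ N := ⟨by omega, by omega⟩
  have hn2 : 1 ≤ n + 2 ∧ n + 2 ≤ N := ⟨by omega, by omega⟩
  simp only [Xg, Yg, Zg, Ring.lie_def, mul_add, add_mul, sub_mul, mul_sub,
    smul_mul_assoc, mul_smul_comm, e_mul, c1, c2, c3, c4, c5, c6, hn, hn1, hn2,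
    if_true, if_false, and_true, and_false, false_and, true_and, le_refl]
  module

lemma lie_H0 (N a b : ℕ) (E : ℕ → ℝ) (ha : 1 ≤ a ∧ a ≤ N) (hb : 1 ≤ b ∧ b ≤ N) :
    ⁅∑ n ∈ Finset.Icc 1 N, (E n : ℂ) • e N n n, e N a b⁆
      = ((E a : ℂ) - E b) • e N a b := by
  rw [sum_lie']
  have : ∀ n ∈ Finset.Icc 1 N, ⁅(E n : ℂ) • e N n n, e N a b⁆
      = (if n = a then (E n : ℂ) • e N a b else 0) - (if n = b then (E n : ℂ) • e N a b else 0) := by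
    intro n hn
    simp only [Finset.mem_Icc] at hn
    rw [smul_lie, lie_e_e]
    by_cases h1 : n = a <;> by_cases h2 : n = b <;> by_cases hab : a = b <;>
      simp_all [smul_sub] <;> (intro h; omega)
  rw [Finset.sum_congr rfl this, Finset.sum_sub_distrib,
    Finset.sum_ite_eq' (Finset.Icc 1 N) a, Finset.sum_ite_eq' (Finset.Icc 1 N) b]
  simp [Finset.mem_Icc, ha.1, ha.2, hb.1, hb.2, sub_smul]

lemma lie_IH0_Y (N a b : ℕ) (E : ℕ → ℝ) (ha : 1 ≤ a ∧ a ≤ N) (hb : 1 ≤ b ∧ b ≤ N) :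
    ⁅Complex.I • ∑ n ∈ Finset.Icc 1 N, (E n : ℂ) • e N n n, Yg N a b⁆
      = (E b - E a : ℝ) • Xg N a b := by
  rw [Yg, smul_lie, lie_smul, lie_add, lie_H0 N a b E ha hb, lie_H0 N b a E hb ha,
    ← rsmul]
  push_cast
  simp only [Xg, smul_smul, smul_add, smul_sub]
  have : Complex.I * Complex.I = -1 := Complex.I_mul_I
  rw [← mul_assoc, ← mul_assoc, this]
  module

lemma lie_IH0_X (N a b : ℕ) (E : ℕ → ℝ) (ha : 1 ≤ a ∧ a ≤ N) (hb : 1 ≤ b ∧ b ≤ N) :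
    ⁅Complex.I • ∑ n ∈ Finset.Icc 1 N, (E n : ℂ) • e N n n, Xg N a b⁆
      = (-(E b - E a) : ℝ) • Yg N a b := by
  rw [Xg, smul_lie, lie_sub, lie_H0 N a b E ha hb, lie_H0 N b a E hb ha, ← rsmul]
  push_cast
  simp only [Yg, smul_smul, smul_add, smul_sub]
  module

set_option maxHeartbeats 1000000 in
lemma inner_br (N n k : ℕ) (hn : 1 ≤ n) (hnN : n + 2 ≤ N) (hk : 1 ≤ k) (hkN : k + 1 ≤ N) :
    ⁅e N n n - e N (n+1) (n+1), e N k (k+1) + e N (k+1) k⁆ =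
      if k + 1 = n then -(Xg N k (k+1)) else if k = n then (2:ℂ) • Xg N k (k+1)
        else if k = n + 1 then -(Xg N k (k+1)) else 0 := by
  simp only [sub_lie, lie_add, lie_e_e, Xg]
  split_ifs <;> first | (exfalso; omega) | (subst_vars; module)

lemma lie_Zg_IH1 (N n : ℕ) (d : ℕ → ℝ) (hn : 1 ≤ n) (hn2 : n + 1 ≤ N - 1) (hN : 2 ≤ N) :
    ⁅Zg N n (n+1), Complex.I • ∑ k ∈ Finset.Icc 1 (N-1), (d k : ℂ) • (e N k (k+1) + e N (k+1) k)⁆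
      = (d (n-1)) • Xg N (n-1) n - ((2 * d n : ℝ)) • Xg N n (n+1) + (d (n+1)) • Xg N (n+1) (n+2) := by
  have hnN : n + 2 ≤ N := by omega
  rw [lie_smul, lie_sum']
  have key : ∀ k ∈ Finset.Icc 1 (N-1), ⁅Zg N n (n+1), (d k:ℂ) • (e N k (k+1) + e N (k+1) k)⁆
      = (if k = n-1 then (d k : ℂ) • (Complex.I • (-(Xg N k (k+1)))) else 0)
        + (if k = n then (d k : ℂ) • (Complex.I • ((2:ℂ) • Xg N k (k+1))) else 0)
        + (if k = n+1 then (d k : ℂ) • (Complex.I • (-(Xg N k (k+1)))) else 0) := by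
    intro k hk
    simp only [Finset.mem_Icc] at hk
    rw [lie_smul, Zg, smul_lie, inner_br N n k hn hnN hk.1 (by omega)]
    by_cases e1 : k + 1 = n
    · have e1' : k = n - 1 := by omega
      have ne2 : k ≠ n := by omega
      have ne3 : k ≠ n+1 := by omega
      simp only [if_pos e1, if_pos e1', if_neg ne2, if_neg ne3, add_zero, zero_add]
    · by_cases e2 : k = n
      · have ne1' : k ≠ n - 1 := by omega
        have ne3 : k ≠ n+1 := by omega
        simp only [if_neg e1, if_pos e2, if_neg ne1', if_neg ne3, add_zero, zero_add]
      · by_cases e3 : k = n+1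
        · have ne1' : k ≠ n - 1 := by omega
          simp only [if_neg e1, if_neg e2, if_pos e3, if_neg ne1', add_zero, zero_add]
        · have ne1' : k ≠ n - 1 := by omega
          simp only [if_neg e1, if_neg e2, if_neg e3, if_neg ne1', smul_zero, add_zero, zero_add]
  rw [Finset.sum_congr rfl key, Finset.sum_add_distrib, Finset.sum_add_distrib,
    Finset.sum_ite_eq' (Finset.Icc 1 (N-1)) (n-1), Finset.sum_ite_eq' (Finset.Icc 1 (N-1)) n,
    Finset.sum_ite_eq' (Finset.Icc 1 (N-1)) (n+1)]
  rw [if_pos (by simp [Finset.mem_Icc]; omega : n ∈ Finset.Icc 1 (N-1)),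
    if_pos (by simp [Finset.mem_Icc]; omega : n + 1 ∈ Finset.Icc 1 (N-1))]
  by_cases h1 : n = 1
  · subst h1
    rw [if_neg (by simp [Finset.mem_Icc] : ¬(1 - 1 ∈ Finset.Icc 1 (N-1)))]
    rw [show (1:ℕ) - 1 = 0 from rfl, Xg_zero, smul_zero]
    rw [← algebraMap_smul ℂ (2 * d 1) (Xg N 1 2), ← algebraMap_smul ℂ (d 2) (Xg N 2 3)]
    push_cast
    match_scalars <;> (ring_nf; simp [Complex.I_sq]) <;> try ring
  · have hmem : n - 1 ∈ Finset.Icc 1 (N-1) := by simp [Finset.mem_Icc]; omega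
    rw [if_pos hmem, show n - 1 + 1 = n from by omega]
    rw [← algebraMap_smul ℂ (d (n-1)) (Xg N (n-1) n),
      ← algebraMap_smul ℂ (2 * d n) (Xg N n (n+1)),
      ← algebraMap_smul ℂ (d (n+1)) (Xg N (n+1) (n+2))]
    push_cast
    match_scalars <;> (ring_nf; simp [Complex.I_sq]) <;> try ring

lemma IH1_eq (N : ℕ) (d : ℕ → ℝ) :
    Complex.I • ∑ k ∈ Finset.Icc 1 (N-1), (d k : ℂ) • (e N k (k+1) + e N (k+1) k)
      = ∑ k ∈ Finset.Icc 1 (N-1), d k • Yg N k (k+1) := by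
  rw [Finset.smul_sum]
  refine Finset.sum_congr rfl fun k _ => ?_
  rw [smul_comm, Yg, rsmul]

lemma base (N : ℕ) (E d : ℕ → ℝ) (hN : 2 ≤ N)
    (hd1 : d 1 ≠ 0)
    (hμ1 : E 2 - E 1 ≠ 0)
    (hμ : ∀ n, 2 ≤ n → n ≤ N - 1 → (E (n+1) - E n)^2 ≠ (E 2 - E 1)^2)
    (g : LieSubalgebra ℝ (Matrix (Fin N) (Fin N) ℂ))
    (hg0 : Complex.I • ∑ n ∈ Finset.Icc 1 N, (E n : ℂ) • e N n n ∈ g)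
    (hg1 : Complex.I • ∑ k ∈ Finset.Icc 1 (N-1), (d k : ℂ) • (e N k (k+1) + e N (k+1) k) ∈ g) :
    Yg N 1 2 ∈ g ∧ Xg N 1 2 ∈ g ∧ Zg N 1 2 ∈ g := by
  set H0 := Complex.I • ∑ n ∈ Finset.Icc 1 N, (E n : ℂ) • e N n n with hH0
  have hu : ∀ k : ℕ,
      (∑ j ∈ Finset.Icc 1 (N-1), (d j * (-(E (j+1) - E j)^2)^k) • Yg N j (j+1)) ∈ g := by
    intro k
    induction k with
    | zero =>
      simp only [pow_zero, mul_one]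
      rw [← IH1_eq]
      exact hg1
    | succ k ih =>
      have step : ∑ j ∈ Finset.Icc 1 (N-1), (d j * (-(E (j+1) - E j)^2)^(k+1)) • Yg N j (j+1)
          = ⁅H0, ⁅H0, ∑ j ∈ Finset.Icc 1 (N-1), (d j * (-(E (j+1) - E j)^2)^k) • Yg N j (j+1)⁆⁆ := by
        rw [lie_sum', lie_sum']
        refine Finset.sum_congr rfl fun j hj => ?_
        simp only [Finset.mem_Icc] at hj
        have h1 : 1 ≤ j ∧ j ≤ N := ⟨hj.1, by omega⟩
        have h2 : 1 ≤ j + 1 ∧ j + 1 ≤ N := ⟨by omega, by omega⟩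
        rw [lie_smul, lie_IH0_Y N j (j+1) E h1 h2, lie_smul, lie_smul,
          lie_IH0_X N j (j+1) E h1 h2, smul_smul, smul_smul]
        congr 1
        ring
      rw [step]
      exact g.lie_mem hg0 (g.lie_mem hg0 ih)
  set S : Finset ℝ := (Finset.Icc 2 (N-1)).image (fun j => -(E (j+1) - E j)^2) with hS
  set p : Polynomial ℝ := ∏ s ∈ S, (Polynomial.X - Polynomial.C s) with hp
  have hdeg : p.natDegree = S.card := by
    rw [hp, Polynomial.natDegree_prod _ _ (fun s _ => Polynomial.X_sub_C_ne_zero s)]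
    simp [Polynomial.natDegree_X_sub_C]
  have hv : (∑ j ∈ Finset.Icc 1 (N-1), (d j * p.eval (-(E (j+1) - E j)^2)) • Yg N j (j+1)) ∈ g := by
    have h1 : ∀ k, p.coeff k • ∑ j ∈ Finset.Icc 1 (N-1), (d j * (-(E (j+1) - E j)^2)^k) • Yg N j (j+1)
        = ∑ j ∈ Finset.Icc 1 (N-1), (p.coeff k * (d j * (-(E (j+1) - E j)^2)^k)) • Yg N j (j+1) := by
      intro k
      rw [Finset.smul_sum]
      exact Finset.sum_congr rfl fun j _ => by rw [smul_smul]
    have expand : ∑ j ∈ Finset.Icc 1 (N-1), (d j * p.eval (-(E (j+1) - E j)^2)) • Yg N j (j+1)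
        = ∑ k ∈ Finset.range (p.natDegree + 1), p.coeff k •
            ∑ j ∈ Finset.Icc 1 (N-1), (d j * (-(E (j+1) - E j)^2)^k) • Yg N j (j+1) := by
      rw [Finset.sum_congr rfl (fun k _ => h1 k), Finset.sum_comm]
      refine Finset.sum_congr rfl fun j _ => ?_
      rw [← Finset.sum_smul]
      congr 1
      rw [Polynomial.eval_eq_sum_range, Finset.mul_sum]
      exact Finset.sum_congr rfl fun k _ => by ring
    rw [expand]
    exact sum_mem fun k _ => g.smul_mem _ (hu k)
  have collapse : ∑ j ∈ Finset.Icc 1 (N-1), (d j * p.eval (-(E (j+1) - E j)^2)) • Yg N j (j+1)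
      = (d 1 * p.eval (-(E 2 - E 1)^2)) • Yg N 1 2 := by
    rw [Finset.sum_eq_single_of_mem 1 (by simp [Finset.mem_Icc]; omega)]
    · intro j hj hj1
      simp only [Finset.mem_Icc] at hj
      have h2j : 2 ≤ j := by omega
      have hzero : p.eval (-(E (j+1) - E j)^2) = 0 := by
        rw [hp, Polynomial.eval_prod]
        refine Finset.prod_eq_zero (Finset.mem_image.2 ⟨j, by simp [Finset.mem_Icc]; omega, rfl⟩) ?_
        simp
      rw [hzero, mul_zero, zero_smul]
  have hne : d 1 * p.eval (-(E 2 - E 1)^2) ≠ 0 := by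
    refine mul_ne_zero hd1 ?_
    rw [hp, Polynomial.eval_prod]
    rw [Finset.prod_ne_zero_iff]
    intro s hs
    obtain ⟨j, hj, rfl⟩ := Finset.mem_image.1 hs
    simp only [Finset.mem_Icc] at hj
    simp only [Polynomial.eval_sub, Polynomial.eval_X, Polynomial.eval_C]
    intro hcon
    exact hμ j hj.1 hj.2 (by nlinarith [hcon])
  have hY : Yg N 1 2 ∈ g := by
    have := g.smul_mem (d 1 * p.eval (-(E 2 - E 1)^2))⁻¹ (collapse ▸ hv)
    rwa [smul_smul, inv_mul_cancel₀ hne, one_smul] at this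
  have hX : Xg N 1 2 ∈ g := by
    have hb := g.lie_mem hg0 hY
    rw [lie_IH0_Y N 1 2 E ⟨le_refl 1, by omega⟩ ⟨by omega, by omega⟩] at hb
    have := g.smul_mem (E 2 - E 1)⁻¹ hb
    rwa [smul_smul, inv_mul_cancel₀ hμ1, one_smul] at this
  have hZ : Zg N 1 2 ∈ g := by
    have hb := g.lie_mem hX hY
    rw [lie_Xg_Yg_same N 1 2 (by omega) ⟨le_refl 1, by omega⟩ ⟨by omega, by omega⟩] at hb
    have := g.smul_mem (2:ℝ)⁻¹ hb
    rwa [smul_smul, inv_mul_cancel₀ (by norm_num), one_smul] at this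
  exact ⟨hY, hX, hZ⟩

lemma Zmem {N : ℕ} (m n : ℕ) (hmn : m ≠ n) (hm : 1 ≤ m ∧ m ≤ N) (hn : 1 ≤ n ∧ n ≤ N)
    (g : LieSubalgebra ℝ (Matrix (Fin N) (Fin N) ℂ))
    (hX : Xg N m n ∈ g) (hY : Yg N m n ∈ g) : Zg N m n ∈ g := by
  have hb := g.lie_mem hX hY
  rw [lie_Xg_Yg_same N m n hmn hm hn] at hb
  have := g.smul_mem (2:ℝ)⁻¹ hb
  rwa [smul_smul, inv_mul_cancel₀ (by norm_num), one_smul] at this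

lemma chain (N : ℕ) (E d : ℕ → ℝ) (hN : 2 ≤ N)
    (hd : ∀ n, 1 ≤ n → n ≤ N - 1 → d n ≠ 0)
    (hμ1 : E 2 - E 1 ≠ 0)
    (hμ : ∀ n, 2 ≤ n → n ≤ N - 1 → (E (n+1) - E n)^2 ≠ (E 2 - E 1)^2)
    (g : LieSubalgebra ℝ (Matrix (Fin N) (Fin N) ℂ))
    (hg0 : Complex.I • ∑ n ∈ Finset.Icc 1 N, (E n : ℂ) • e N n n ∈ g)
    (hg1 : Complex.I • ∑ k ∈ Finset.Icc 1 (N-1), (d k : ℂ) • (e N k (k+1) + e N (k+1) k) ∈ g) :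
    ∀ n, 1 ≤ n → n ≤ N - 1 → Xg N n (n+1) ∈ g ∧ Yg N n (n+1) ∈ g ∧ Zg N n (n+1) ∈ g := by
  intro n
  induction n using Nat.strong_induction_on with
  | _ n ih =>
    intro h1 h2
    rcases eq_or_lt_of_le h1 with h | h
    · -- n = 1
      obtain ⟨hY, hX, hZ⟩ := base N E d hN (hd 1 (by omega) (by omega)) hμ1 hμ g hg0 hg1
      subst h
      exact ⟨hX, hY, hZ⟩
    · -- n ≥ 2
      set m := n - 1 with hm
      have hmn : m + 1 = n := by omega
      have hm1 : 1 ≤ m := by omega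
      have hm2 : m + 1 ≤ N - 1 := by omega
      obtain ⟨hXm, hYm, hZm⟩ := ih m (by omega) hm1 (by omega)
      have hXprev : (d (m-1)) • Xg N (m-1) m ∈ g := by
        rcases eq_or_lt_of_le hm1 with hm' | hm'
        · rw [← hm', show (1:ℕ) - 1 = 0 from rfl, Xg_zero, smul_zero]
          exact g.zero_mem
        · have := (ih (m-1) (by omega) (by omega) (by omega)).1
          rw [show m - 1 + 1 = m from by omega] at this
          exact g.smul_mem _ this
      have hbr := g.lie_mem hZm hg1
      rw [lie_Zg_IH1 N m d hm1 hm2 hN] at hbr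
      have hc : (d (m+1)) • Xg N (m+1) (m+2) ∈ g := by
        have heq : (d (m+1)) • Xg N (m+1) (m+2)
            = ((d (m-1)) • Xg N (m-1) m - ((2 * d m : ℝ)) • Xg N m (m+1)
                + (d (m+1)) • Xg N (m+1) (m+2))
              - (d (m-1)) • Xg N (m-1) m + ((2 * d m : ℝ)) • Xg N m (m+1) := by
          abel
        rw [heq]
        exact g.add_mem (g.sub_mem hbr hXprev) (g.smul_mem _ hXm)
      have hdn : d (m+1) ≠ 0 := hd (m+1) (by omega) (by omega)
      have hXn : Xg N (m+1) (m+2) ∈ g := by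
        have := g.smul_mem (d (m+1))⁻¹ hc
        rwa [smul_smul, inv_mul_cancel₀ hdn, one_smul] at this
      have hYn : Yg N (m+1) (m+2) ∈ g := by
        have hb := g.lie_mem hZm hXn
        rw [lie_Zg_Xg_adj N m hm1 (by omega)] at hb
        have := g.neg_mem hb
        rwa [neg_neg] at this
      have hZn : Zg N (m+1) (m+2) ∈ g :=
        Zmem (m+1) (m+2) (by omega) ⟨by omega, by omega⟩ ⟨by omega, by omega⟩ g hXn hYn
      rw [← hmn]
      exact ⟨hXn, hYn, hZn⟩

lemma pairs (N : ℕ) (g : LieSubalgebra ℝ (Matrix (Fin N) (Fin N) ℂ))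
    (hchain : ∀ n, 1 ≤ n → n ≤ N - 1 → Xg N n (n+1) ∈ g ∧ Yg N n (n+1) ∈ g ∧ Zg N n (n+1) ∈ g) :
    ∀ n m, 1 ≤ m → m < n → n ≤ N → Xg N m n ∈ g ∧ Yg N m n ∈ g := by
  intro n
  induction n using Nat.strong_induction_on with
  | _ n ih =>
    intro m h1 h2 h3
    by_cases h : n = m + 1
    · subst h
      exact ⟨(hchain m h1 (by omega)).1, (hchain m h1 (by omega)).2.1⟩
    · have h4 : m + 1 < n := by omega
      have hprev := ih (n-1) (by omega) m h1 (by omega) (by omega)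
      have hcx : Xg N (n-1) n ∈ g := by
        have := (hchain (n-1) (by omega) (by omega)).1
        rwa [show n - 1 + 1 = n from by omega] at this
      have hcy : Yg N (n-1) n ∈ g := by
        have := (hchain (n-1) (by omega) (by omega)).2.1
        rwa [show n - 1 + 1 = n from by omega] at this
      constructor
      · rw [← lie_Xg_Xg N m (n-1) n (by omega) (by omega) (by omega) ⟨by omega, by omega⟩]
        exact g.lie_mem hprev.1 hcx
      · rw [← lie_Xg_Yg N m (n-1) n (by omega) (by omega) (by omega) ⟨by omega, by omega⟩]
        exact g.lie_mem hprev.1 hcy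

lemma Xg_apply {N : ℕ} (i j a b : Fin N) :
    Xg N ((i:ℕ)+1) ((j:ℕ)+1) a b
      = (if a = i ∧ b = j then 1 else 0) - (if a = j ∧ b = i then 1 else 0) := by
  simp [Xg, e, Fin.ext_iff]

lemma Yg_apply {N : ℕ} (i j a b : Fin N) :
    Yg N ((i:ℕ)+1) ((j:ℕ)+1) a b
      = Complex.I * ((if a = i ∧ b = j then 1 else 0) + (if a = j ∧ b = i then 1 else 0)) := by
  simp [Yg, e, Fin.ext_iff]

lemma Zg_apply {N : ℕ} (i a b : Fin N) :
    Zg N ((i:ℕ)+1) N a b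
      = Complex.I * ((if a = i ∧ b = i then 1 else 0)
          - (if (a:ℕ)+1 = N ∧ (b:ℕ)+1 = N then 1 else 0)) := by
  simp [Zg, e, Fin.ext_iff]

lemma decomp {N : ℕ} (A : Matrix (Fin N) (Fin N) ℂ) (hA : Aᴴ = -A) (htr : A.trace = 0) :
    A = (1/2 : ℝ) • (∑ i : Fin N, ∑ j : Fin N, if i = j then 0 else
          ((A i j).re • Xg N ((i:ℕ)+1) ((j:ℕ)+1) + (A i j).im • Yg N ((i:ℕ)+1) ((j:ℕ)+1)))
        + ∑ i : Fin N, (A i i).im • Zg N ((i:ℕ)+1) N := by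
  have hconj : ∀ a b : Fin N, (starRingEnd ℂ) (A a b) = - A b a := by
    intro a b
    have := congrFun (congrFun hA b) a
    simpa [Matrix.conjTranspose_apply] using this
  have hre : ∀ a : Fin N, (A a a).re = 0 := by
    intro a
    have := hconj a a
    have h2 := congrArg Complex.re this
    simp at h2
    linarith
  have htr' : ∑ i : Fin N, ((A i i).im : ℂ) = 0 := by
    have h1 : ∑ i : Fin N, (A i i).im = 0 := by
      have := congrArg Complex.im htr
      simpa [Matrix.trace, Matrix.diag] using this
    push_cast [← h1]
    norm_cast
  have crei : ∀ z : ℂ, ((z.re : ℂ) + Complex.I * z.im) = z := by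
    intro z
    rw [mul_comm]
    exact Complex.re_add_im z
  ext a b
  simp only [Matrix.add_apply, Matrix.smul_apply, Matrix.sum_apply]
  have soff : ∑ i : Fin N, ∑ j : Fin N, ((if i = j then (0 : Matrix (Fin N) (Fin N) ℂ) else
        ((A i j).re • Xg N ((i:ℕ)+1) ((j:ℕ)+1) + (A i j).im • Yg N ((i:ℕ)+1) ((j:ℕ)+1))) a b)
      = if a = b then 0 else 2 * A a b := by
    by_cases hab : a = b
    · subst hab
      rw [if_pos rfl]
      refine Finset.sum_eq_zero fun i _ => Finset.sum_eq_zero fun j _ => ?_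
      by_cases hij : i = j
      · simp [hij]
      · simp only [if_neg hij, Matrix.add_apply, Matrix.smul_apply, Xg_apply, Yg_apply]
        by_cases hai : a = i <;> by_cases haj : a = j <;>
          simp_all <;> ring
    · rw [if_neg hab]
      have key : ∀ i j : Fin N, ((if i = j then (0 : Matrix (Fin N) (Fin N) ℂ) else
            ((A i j).re • Xg N ((i:ℕ)+1) ((j:ℕ)+1) + (A i j).im • Yg N ((i:ℕ)+1) ((j:ℕ)+1))) a b)
          = (if i = a ∧ j = b then ((A a b).re + Complex.I * (A a b).im) else 0)
            + (if i = b ∧ j = a then (-((A b a).re : ℂ) + Complex.I * (A b a).im) else 0) := by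
        intro i j
        by_cases hij : i = j
        · subst hij
          have h1 : ¬(i = a ∧ i = b) := by rintro ⟨rfl, rfl⟩; exact hab rfl
          have h2 : ¬(i = b ∧ i = a) := by rintro ⟨rfl, rfl⟩; exact hab rfl
          rw [if_pos rfl, if_neg h1, if_neg h2, Matrix.zero_apply, add_zero]
        · rw [if_neg hij, Matrix.add_apply, Matrix.smul_apply, Matrix.smul_apply,
            Xg_apply, Yg_apply, Complex.real_smul, Complex.real_smul]
          by_cases h1 : a = i
          · subst h1
            by_cases h2 : b = j
            · subst h2
              have c1 : ¬(a = b ∧ b = a) := by rintro ⟨rfl, -⟩; exact hab rfl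
              rw [if_pos (⟨rfl, rfl⟩ : a = a ∧ b = b), if_neg c1,
                if_pos (⟨rfl, rfl⟩ : a = a ∧ b = b), if_neg c1]
              ring
            · have f1 : ¬(a = a ∧ b = j) := by rintro ⟨-, h⟩; exact h2 h
              have f2 : ¬(a = j ∧ b = a) := by rintro ⟨h, -⟩; exact hij h
              have f3 : ¬(a = a ∧ j = b) := by rintro ⟨-, h⟩; exact h2 h.symm
              have f4 : ¬(a = b ∧ j = a) := by rintro ⟨h, -⟩; exact hab h
              rw [if_neg f1, if_neg f2, if_neg f3, if_neg f4]
              ring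
          · by_cases h2 : a = j ∧ b = i
            · obtain ⟨rfl, rfl⟩ := h2
              have c1 : ¬(a = b ∧ b = a) := by rintro ⟨rfl, -⟩; exact hab rfl
              have c2 : ¬(b = a ∧ a = b) := by rintro ⟨rfl, -⟩; exact hab rfl
              rw [if_pos (⟨rfl, rfl⟩ : a = a ∧ b = b), if_neg c1, if_neg c2,
                if_pos (⟨rfl, rfl⟩ : b = b ∧ a = a)]
              ring
            · have f1 : ¬(a = i ∧ b = j) := by rintro ⟨h, -⟩; exact h1 h
              have f2 : ¬(i = a ∧ j = b) := by rintro ⟨h, -⟩; exact h1 h.symm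
              have f3 : ¬(i = b ∧ j = a) := by rintro ⟨hh1, hh2⟩; exact h2 ⟨hh2.symm, hh1.symm⟩
              rw [if_neg f1, if_neg h2, if_neg f2, if_neg f3]
              ring
      rw [Finset.sum_congr rfl fun i _ => Finset.sum_congr rfl fun j _ => key i j]
      have s1 : ∀ (c : ℂ), ∑ i : Fin N, ∑ j : Fin N, (if i = a ∧ j = b then c else 0) = c := by
        intro c
        rw [Finset.sum_comm]
        rw [Finset.sum_eq_single b (fun j _ hj => Finset.sum_eq_zero fun i _ => by
          simp [hj]) (by simp)]
        rw [Finset.sum_eq_single a (fun i _ hi => by simp [hi]) (by simp)]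
        simp
      have s2 : ∀ (c : ℂ), ∑ i : Fin N, ∑ j : Fin N, (if i = b ∧ j = a then c else 0) = c := by
        intro c
        rw [Finset.sum_comm]
        rw [Finset.sum_eq_single a (fun j _ hj => Finset.sum_eq_zero fun i _ => by
          simp [hj]) (by simp)]
        rw [Finset.sum_eq_single b (fun i _ hi => by simp [hi]) (by simp)]
        simp
      rw [Finset.sum_congr rfl fun i _ => Finset.sum_add_distrib, Finset.sum_add_distrib, s1, s2]
      have hstar : ∀ z : ℂ, (starRingEnd ℂ) z = (z.re : ℂ) - Complex.I * z.im := by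
        intro z
        apply Complex.ext <;> simp
      have : -((A b a).re : ℂ) + Complex.I * (A b a).im = A a b := by
        have h2 : A a b = -(starRingEnd ℂ) (A b a) := by rw [hconj b a]; ring
        rw [h2, hstar]
        ring
      rw [this, crei]
      ring
  have sdiag : ∑ i : Fin N, (A i i).im • (Zg N ((i:ℕ)+1) N a b)
      = if a = b then Complex.I * (A a a).im else 0 := by
    by_cases hab : a = b
    · subst hab
      rw [if_pos rfl]
      have key : ∀ i : Fin N, (A i i).im • (Zg N ((i:ℕ)+1) N a a)
          = (if i = a then Complex.I * (A i i).im else 0)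
            - ((A i i).im : ℂ) * (if (a:ℕ)+1 = N then Complex.I else 0) := by
        intro i
        rw [Zg_apply, Complex.real_smul]; simp only [and_self]
        rcases eq_or_ne i a with rfl | hia
        · rw [if_pos rfl, if_pos rfl]
          by_cases haN : (i:ℕ)+1 = N
          · rw [if_pos haN, if_pos haN]; ring
          · rw [if_neg haN, if_neg haN]; ring
        · have hai : ¬(a = i) := fun h => hia h.symm
          rw [if_neg hai, if_neg hia]
          by_cases haN : (a:ℕ)+1 = N
          · rw [if_pos haN, if_pos haN]; ring
          · rw [if_neg haN, if_neg haN]; ring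
      rw [Finset.sum_congr rfl fun i _ => key i, Finset.sum_sub_distrib,
        Finset.sum_ite_eq' Finset.univ a, ← Finset.sum_mul, htr']
      simp
    · rw [if_neg hab]
      refine Finset.sum_eq_zero fun i _ => ?_
      rw [Zg_apply, Complex.real_smul]
      have h1 : ¬(a = i ∧ b = i) := by rintro ⟨rfl, rfl⟩; exact hab rfl
      have h2 : ¬((a:ℕ)+1 = N ∧ (b:ℕ)+1 = N) := by
        rintro ⟨ha, hb⟩
        exact hab (Fin.ext (by omega))
      rw [if_neg h1, if_neg h2]
      ring
  rw [soff, sdiag]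
  by_cases hab : a = b
  · subst hab
    simp only [if_pos rfl]
    have : A a a = Complex.I * (A a a).im := by
      nth_rewrite 1 [← Complex.re_add_im (A a a)]
      rw [hre a]
      push_cast
      ring
    rw [← this]
    simp
  · simp only [if_neg hab]
    rw [Complex.real_smul]
    push_cast
    ring


theorem theorem_one (N : ℕ) (E d : ℕ → ℝ)
    (hd : ∀ n, 1 ≤ n → n ≤ N - 1 → d n ≠ 0)
    (hμ1 : E 2 - E 1 ≠ 0)
    (hμ : ∀ n, 2 ≤ n → n ≤ N - 1 → (E (n+1) - E n)^2 ≠ (E 2 - E 1)^2) :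
    let H₀ : Matrix (Fin N) (Fin N) ℂ := ∑ n ∈ Finset.Icc 1 N, (E n : ℂ) • e N n n
    let H₁ : Matrix (Fin N) (Fin N) ℂ :=
      ∑ n ∈ Finset.Icc 1 (N-1), (d n : ℂ) • (e N n (n+1) + e N (n+1) n)
    ∀ A : Matrix (Fin N) (Fin N) ℂ, Aᴴ = -A → A.trace = 0 →
      A ∈ LieSubalgebra.lieSpan ℝ (Matrix (Fin N) (Fin N) ℂ)
            {Complex.I • H₀, Complex.I • H₁} := by
  intro H₀ H₁ A hA htr
  rcases Nat.lt_or_ge N 2 with hN | hN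
  · interval_cases N
    · have hA0 : A = 0 := Subsingleton.elim A 0
      rw [hA0]
      exact zero_mem _
    · have h00 : A 0 0 = 0 := by simpa [Matrix.trace, Fin.sum_univ_one] using htr
      have hA0 : A = 0 := by
        ext a b
        rw [Subsingleton.elim a 0, Subsingleton.elim b 0, h00, Matrix.zero_apply]
      rw [hA0]
      exact zero_mem _
  · set g := LieSubalgebra.lieSpan ℝ (Matrix (Fin N) (Fin N) ℂ)
      {Complex.I • H₀, Complex.I • H₁} with hgdef
    show A ∈ g
    have hg0 : Complex.I • (∑ n ∈ Finset.Icc 1 N, (E n : ℂ) • e N n n) ∈ g :=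
      LieSubalgebra.subset_lieSpan (Set.mem_insert _ _)
    have hg1 : Complex.I • (∑ k ∈ Finset.Icc 1 (N-1), (d k : ℂ) • (e N k (k+1) + e N (k+1) k)) ∈ g :=
      LieSubalgebra.subset_lieSpan (Set.mem_insert_of_mem _ rfl)
    have hchain := chain N E d hN hd hμ1 hμ g hg0 hg1
    have hpairs := pairs N g hchain
    have hXY' : ∀ i j : Fin N, i ≠ j →
        Xg N ((i:ℕ)+1) ((j:ℕ)+1) ∈ g ∧ Yg N ((i:ℕ)+1) ((j:ℕ)+1) ∈ g := by
      intro i j hij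
      have hiN := i.isLt
      have hjN := j.isLt
      rcases lt_or_gt_of_ne hij with h | h
      · have hv : (i:ℕ) < (j:ℕ) := h
        exact hpairs ((j:ℕ)+1) ((i:ℕ)+1) (by omega) (by omega) (by omega)
      · have hv : (j:ℕ) < (i:ℕ) := h
        have hsw := hpairs ((i:ℕ)+1) ((j:ℕ)+1) (by omega) (by omega) (by omega)
        constructor
        · rw [show Xg N ((i:ℕ)+1) ((j:ℕ)+1) = - Xg N ((j:ℕ)+1) ((i:ℕ)+1) from by
            simp [Xg]]
          exact g.neg_mem hsw.1
        · rw [show Yg N ((i:ℕ)+1) ((j:ℕ)+1) = Yg N ((j:ℕ)+1) ((i:ℕ)+1) from by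
            simp [Yg, add_comm]]
          exact hsw.2
    have hZ' : ∀ i : Fin N, Zg N ((i:ℕ)+1) N ∈ g := by
      intro i
      have hiN := i.isLt
      by_cases hi : (i:ℕ)+1 = N
      · rw [hi, show Zg N N N = 0 from by simp [Zg]]
        exact g.zero_mem
      · have hp := hpairs N ((i:ℕ)+1) (by omega) (by omega) (le_refl N)
        exact Zmem ((i:ℕ)+1) N (by omega) ⟨by omega, by omega⟩ ⟨by omega, le_refl N⟩ g hp.1 hp.2
    rw [decomp A hA htr]
    refine g.add_mem (g.smul_mem _ (sum_mem fun i _ => sum_mem fun j _ => ?_))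
      (sum_mem fun i _ => g.smul_mem _ (hZ' i))
    by_cases hij : i = j
    · rw [if_pos hij]
      exact g.zero_mem
    · rw [if_neg hij]
      exact g.add_mem (g.smul_mem _ (hXY' i j hij).1) (g.smul_mem _ (hXY' i j hij).2)
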